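/- arXiv:2210.03961 — 2 statements merged into one kernel-verified Lean document; each statement's English description precedes it below -/
import Mathlib

section
/- Let A ∈ ℝ^{n×d}, b ∈ ℝ^n, L ∈ ℝ^{p×d}, λ ≥ 0, and S ∈ ℝ^{m×n} with (1−ε)‖Ax−b‖₂² ≤ ‖S(Ax−b)‖₂² ≤ (1+ε)‖Ax−b‖₂² for all x ∈ ℝ^d and 0 < ε < 1. If x̃ minimizes f_S(x) := ‖S(Ax−b)‖₂² + λ‖Lx‖₂², then f(x̃) := ‖Ax̃−b‖₂² + λ‖Lx̃‖₂² ≤ ((1+ε)/(1−ε)) · min_x (‖Ax−b‖₂² + λ‖Lx‖₂²). -/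
open Matrix

/-- Squared ℓ₂ norm of a vector. -/
def sqnorm {n : Type*} [Fintype n] (v : n → ℝ) : ℝ := ∑ i, (v i) ^ 2

lemma sqnorm_nonneg {n : Type*} [Fintype n] (v : n → ℝ) : 0 ≤ sqnorm v :=
  Finset.sum_nonneg fun i _ => sq_nonneg _

theorem sketch_and_solve_spline {n d m p : ℕ}
    (A : Matrix (Fin n) (Fin d) ℝ) (b : Fin n → ℝ) (L : Matrix (Fin p) (Fin d) ℝ)
    (S : Matrix (Fin m) (Fin n) ℝ) (lam : ℝ) (hlam : 0 ≤ lam)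
    (ε : ℝ) (hε : 0 < ε) (hε1 : ε < 1)
    (hS : ∀ x : Fin d → ℝ,
      (1 - ε) * sqnorm (A.mulVec x - b) ≤ sqnorm (S.mulVec (A.mulVec x - b)) ∧
        sqnorm (S.mulVec (A.mulVec x - b)) ≤ (1 + ε) * sqnorm (A.mulVec x - b))
    (xt : Fin d → ℝ)
    (hxt : ∀ x : Fin d → ℝ,
      sqnorm (S.mulVec (A.mulVec xt - b)) + lam * sqnorm (L.mulVec xt) ≤
        sqnorm (S.mulVec (A.mulVec x - b)) + lam * sqnorm (L.mulVec x)) :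
    ∀ x : Fin d → ℝ,
      sqnorm (A.mulVec xt - b) + lam * sqnorm (L.mulVec xt) ≤
        (1 + ε) / (1 - ε) * (sqnorm (A.mulVec x - b) + lam * sqnorm (L.mulVec x)) := by
  intro x
  have h1 := (hS xt).1
  have h2 := (hS x).2
  have h3 := hxt x
  have hL : 0 ≤ lam * sqnorm (L.mulVec xt) := mul_nonneg hlam (sqnorm_nonneg _)
  have hLx : 0 ≤ lam * sqnorm (L.mulVec x) := mul_nonneg hlam (sqnorm_nonneg _)
  have hpos : 0 < 1 - ε := by linarith
  rw [div_mul_eq_mul_div, le_div_iff₀ hpos]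
  nlinarith [sqnorm_nonneg (A.mulVec xt - b), sqnorm_nonneg (A.mulVec x - b)]
end

section
/- Let A ∈ ℝ^{n×d} and S ∈ ℝ^{m×n} be a k-projection-cost-preserving sketch for A: there is c ≥ 0 such that for every rank-k orthogonal projection P ∈ ℝ^{d×d}, (1−ε)‖A−AP‖_F² ≤ ‖SA−SAP‖_F² + c ≤ (1+ε)‖A−AP‖_F². Let P̂ be a rank-k orthogonal projection minimizing ‖SA−SAP‖_F² over rank-k projections. Then ‖A − AP̂‖_F² ≤ ((1+ε)/(1−ε)) · min over rank-k projections P of ‖A−AP‖_F². -/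
open Matrix

/-- Squared Frobenius norm of a matrix. -/
def frobSq {n m : Type*} [Fintype n] [Fintype m] (A : Matrix n m ℝ) : ℝ :=
  ∑ i, ∑ j, (A i j) ^ 2

/-- `P` is a rank-`k` orthogonal projection. -/
def IsRankKProj {d : ℕ} (k : ℕ) (P : Matrix (Fin d) (Fin d) ℝ) : Prop :=
  P * P = P ∧ Pᵀ = P ∧ P.rank = k

theorem pcp_sketch_lra {n d m k : ℕ}
    (A : Matrix (Fin n) (Fin d) ℝ) (S : Matrix (Fin m) (Fin n) ℝ)
    (ε : ℝ) (hε : 0 < ε) (hε1 : ε < 1) (c : ℝ) (hc : 0 ≤ c)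
    (hpcp : ∀ P : Matrix (Fin d) (Fin d) ℝ, IsRankKProj k P →
      (1 - ε) * frobSq (A - A * P) ≤ frobSq (S * A - S * A * P) + c ∧
        frobSq (S * A - S * A * P) + c ≤ (1 + ε) * frobSq (A - A * P))
    (Phat : Matrix (Fin d) (Fin d) ℝ) (hPhat : IsRankKProj k Phat)
    (hmin : ∀ P : Matrix (Fin d) (Fin d) ℝ, IsRankKProj k P →
      frobSq (S * A - S * A * Phat) ≤ frobSq (S * A - S * A * P)) :
    ∀ P : Matrix (Fin d) (Fin d) ℝ, IsRankKProj k P →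
      frobSq (A - A * Phat) ≤ (1 + ε) / (1 - ε) * frobSq (A - A * P) := by
  intro P hP
  have h1 := (hpcp Phat hPhat).1
  have h2 := (hpcp P hP).2
  have h3 := hmin P hP
  have hpos : 0 < 1 - ε := by linarith
  rw [div_mul_eq_mul_div, le_div_iff₀ hpos]
  nlinarith
end
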